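/- Let A = [A_{ij}] and B = [B_{ij}] be positive definite complex matrices of size nk × nk, each regarded as an n × n block matrix with k × k blocks, and let 2 ≤ μ ≤ n. Then both differences (A_μ ∘ B_μ)/(A_{μ−1} ∘ B_{μ−1}) − B_{μμ} ∘ (A_μ/A_{μ−1}) and B_{μμ} ∘ (A_μ/A_{μ−1}) − (A_μ/A_{μ−1}) ∘ (B_μ/B_{μ−1}) are positive semidefinite k × k matrices. -/

import Mathlib

open Matrix ComplexOrder

/-- The `μk × μk` leading principal block submatrix `A_μ` (for `μ ≤ n`) of an
`n × n` block matrix with `k × k` blocks. -/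
def leadBlock {n k : ℕ} (A : Matrix (Fin n × Fin k) (Fin n × Fin k) ℂ)
    (μ : ℕ) (h : μ ≤ n) : Matrix (Fin μ × Fin k) (Fin μ × Fin k) ℂ :=
  A.submatrix (fun p => (Fin.castLE h p.1, p.2)) (fun p => (Fin.castLE h p.1, p.2))

/-- The `μ`-th (1-based) diagonal `k × k` block `A_{μμ}` of an
`n × n` block matrix with `k × k` blocks. -/
def diagBlock {n k : ℕ} (A : Matrix (Fin n × Fin k) (Fin n × Fin k) ℂ)
    (μ : ℕ) (h : μ - 1 < n) : Matrix (Fin k) (Fin k) ℂ :=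
  Matrix.of fun a b => A (⟨μ - 1, h⟩, a) (⟨μ - 1, h⟩, b)

/-- The `k × k` Schur complement `A_μ / A_{μ-1}` of the leading principal block
submatrix `A_{μ-1}` in the leading principal block submatrix `A_μ`, i.e.
`A_{μμ} − M₂₁ A_{μ-1}⁻¹ M₁₂` where `M₂₁` (resp. `M₁₂`) is the `μ`-th block row
(resp. column) of `A_μ` with its last block removed. -/
noncomputable def schurLead {n k : ℕ} (A : Matrix (Fin n × Fin k) (Fin n × Fin k) ℂ)
    (μ : ℕ) (h : μ - 1 < n) : Matrix (Fin k) (Fin k) ℂ :=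
  diagBlock A μ h -
    (Matrix.of fun a (p : Fin (μ - 1) × Fin k) =>
        A (⟨μ - 1, h⟩, a) (Fin.castLE h.le p.1, p.2)) *
      (leadBlock A (μ - 1) h.le)⁻¹ *
      (Matrix.of fun (p : Fin (μ - 1) × Fin k) b =>
        A (Fin.castLE h.le p.1, p.2) (⟨μ - 1, h⟩, b))

/-!
Write `A_μ = [[P, C], [Cᴴ, D]]` and `B_μ = [[Q, E], [Eᴴ, F]]` with `P = A_{μ-1}`, `Q = B_{μ-1}`,
`D = A_{μμ}`, `F = B_{μμ}`. The matrix `[[P, C], [Cᴴ, Cᴴ P⁻¹ C]]` has zero Schur complement, so it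
is positive semidefinite, and by the Schur product theorem so is its Hadamard product with `B_μ`;
the Schur complement of `P ∘ Q` in that product is the first difference. The second difference
factors as `(A_μ/A_{μ-1}) ∘ (Eᴴ Q⁻¹ E)`, a Hadamard product of positive semidefinite matrices.
-/

namespace Matrix

variable {𝕜 m l α : Type*}

theorem fromBlocks_hadamard_fromBlocks [Mul α] {m' l' : Type*}
    (P : Matrix m m' α) (C : Matrix m l' α) (R : Matrix l m' α) (D : Matrix l l' α)
    (Q : Matrix m m' α) (E : Matrix m l' α) (T : Matrix l m' α) (F : Matrix l l' α) :
    fromBlocks P C R D ⊙ fromBlocks Q E T F = fromBlocks (P ⊙ Q) (C ⊙ E) (R ⊙ T) (D ⊙ F) := by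
  ext (i | i) (j | j) <;> rfl

variable [RCLike 𝕜] [Fintype m] [DecidableEq m] [Fintype l]

theorem posSemidef_schur_hadamard_sub_hadamard_schur {P Q : Matrix m m 𝕜}
    {C E : Matrix m l 𝕜} {D F : Matrix l l 𝕜} (hP : P.PosDef) (hQ : Q.PosDef)
    (hN : (fromBlocks Q E Eᴴ F).PosSemidef) :
    ((D ⊙ F - (C ⊙ E)ᴴ * (P ⊙ Q)⁻¹ * (C ⊙ E)) - F ⊙ (D - Cᴴ * P⁻¹ * C)).PosSemidef := by
  have hPQ : (P ⊙ Q).PosDef := hP.hadamard hQ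
  have := hP.isUnit.invertible
  have := hPQ.isUnit.invertible
  have hM : (fromBlocks P C Cᴴ (Cᴴ * P⁻¹ * C)).PosSemidef :=
    (hP.fromBlocks₁₁ C _).mpr (by simpa only [sub_self] using PosSemidef.zero)
  have hMN := hM.hadamard hN
  rw [fromBlocks_hadamard_fromBlocks, ← conjTranspose_hadamard, hadamard_comm E C,
    hPQ.fromBlocks₁₁] at hMN
  have hsplit : D ⊙ F - (C ⊙ E)ᴴ * (P ⊙ Q)⁻¹ * (C ⊙ E) - F ⊙ (D - Cᴴ * P⁻¹ * C) =
      (Cᴴ * P⁻¹ * C) ⊙ F - (C ⊙ E)ᴴ * (P ⊙ Q)⁻¹ * (C ⊙ E) := by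
    ext i j
    simp only [sub_apply, hadamard_apply]
    ring
  rwa [hsplit]

theorem posSemidef_hadamard_schur_sub_hadamard_schur {P Q : Matrix m m 𝕜}
    {C E : Matrix m l 𝕜} {D F : Matrix l l 𝕜} (hP : P.PosDef)
    (hM : (fromBlocks P C Cᴴ D).PosSemidef) (hQ : Q.PosDef) :
    (F ⊙ (D - Cᴴ * P⁻¹ * C) - (D - Cᴴ * P⁻¹ * C) ⊙ (F - Eᴴ * Q⁻¹ * E)).PosSemidef := by
  have := hP.isUnit.invertible
  have hS : (D - Cᴴ * P⁻¹ * C).PosSemidef := (hP.fromBlocks₁₁ C D).mp hM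
  have hEQE : (Eᴴ * Q⁻¹ * E).PosSemidef := hQ.inv.posSemidef.conjTranspose_mul_mul_same E
  have hfactor : F ⊙ (D - Cᴴ * P⁻¹ * C) - (D - Cᴴ * P⁻¹ * C) ⊙ (F - Eᴴ * Q⁻¹ * E) =
      (D - Cᴴ * P⁻¹ * C) ⊙ (Eᴴ * Q⁻¹ * E) := by
    ext i j
    simp only [sub_apply, hadamard_apply]
    ring
  rw [hfactor]
  exact hS.hadamard hEQE

end Matrix

section LeadingBlocks

variable {n k m : ℕ}

def blockColAbove (A : Matrix (Fin n × Fin k) (Fin n × Fin k) ℂ) (h : m < n) :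
    Matrix (Fin m × Fin k) (Fin k) ℂ :=
  Matrix.of fun p b => A (Fin.castLE h.le p.1, p.2) (⟨m, h⟩, b)

def leadIndexSplit (h : m < n) : (Fin m × Fin k) ⊕ Fin k → Fin n × Fin k :=
  Sum.elim (fun p => (Fin.castLE h.le p.1, p.2)) fun a => (⟨m, h⟩, a)

theorem leadIndexSplit_injective (h : m < n) :
    Function.Injective (leadIndexSplit (k := k) h) := by
  rintro (⟨i, a⟩ | a) (⟨j, b⟩ | b) hij <;>
    simp only [leadIndexSplit, Sum.elim_inl, Sum.elim_inr, Prod.mk.injEq, Fin.ext_iff,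
      Fin.val_castLE, Sum.inl.injEq, Sum.inr.injEq] at hij ⊢
  · exact hij
  · exact absurd hij.1 i.isLt.ne
  · exact absurd hij.1.symm j.isLt.ne
  · exact hij.2

theorem submatrix_leadIndexSplit {A : Matrix (Fin n × Fin k) (Fin n × Fin k) ℂ}
    (hA : A.IsHermitian) (h : m < n) :
    A.submatrix (leadIndexSplit h) (leadIndexSplit h) =
      fromBlocks (leadBlock A m h.le) (blockColAbove A h) (blockColAbove A h)ᴴ
        (diagBlock A (m + 1) h) := by
  ext (_ | _) (_ | _)
  · rfl
  · rfl
  · simp only [submatrix_apply, fromBlocks_apply₂₁, conjTranspose_apply, blockColAbove,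
      of_apply, leadIndexSplit, Sum.elim_inl, Sum.elim_inr]
    rw [hA.apply]
  · rfl

theorem leadBlock_posDef {A : Matrix (Fin n × Fin k) (Fin n × Fin k) ℂ} (hA : A.PosDef)
    {μ : ℕ} (h : μ ≤ n) : (leadBlock A μ h).PosDef :=
  hA.submatrix ((Fin.castLE_injective h).prodMap Function.injective_id)

theorem fromBlocks_leadBlock_posDef {A : Matrix (Fin n × Fin k) (Fin n × Fin k) ℂ}
    (hA : A.PosDef) (h : m < n) :
    (fromBlocks (leadBlock A m h.le) (blockColAbove A h) (blockColAbove A h)ᴴ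
      (diagBlock A (m + 1) h)).PosDef := by
  rw [← submatrix_leadIndexSplit hA.isHermitian h]
  exact hA.submatrix (leadIndexSplit_injective h)

theorem schurLead_eq {A : Matrix (Fin n × Fin k) (Fin n × Fin k) ℂ} (hA : A.IsHermitian)
    (h : m < n) :
    schurLead A (m + 1) h = diagBlock A (m + 1) h -
      (blockColAbove A h)ᴴ * (leadBlock A m h.le)⁻¹ * blockColAbove A h := by
  have hrow : (Matrix.of fun a (p : Fin m × Fin k) => A (⟨m, h⟩, a) (Fin.castLE h.le p.1, p.2)) =
      (blockColAbove A h)ᴴ := by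
    ext a p
    simp only [conjTranspose_apply, blockColAbove, of_apply]
    rw [hA.apply]
  exact congrArg (fun R => diagBlock A (m + 1) h - R * _ * _) hrow

end LeadingBlocks

/-- Inequality (2.8): for positive definite block matrices `A, B ∈ M_n(M_k)` and
`2 ≤ μ ≤ n`, both `(A_μ∘B_μ)/(A_{μ-1}∘B_{μ-1}) − B_{μμ}∘(A_μ/A_{μ-1})` and
`B_{μμ}∘(A_μ/A_{μ-1}) − (A_μ/A_{μ-1})∘(B_μ/B_{μ-1})` are positive semidefinite. -/
theorem schur_hadamard_chain_B {n k : ℕ}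
    (A B : Matrix (Fin n × Fin k) (Fin n × Fin k) ℂ)
    (hA : A.PosDef) (hB : B.PosDef)
    (μ : ℕ) (hμ2 : 2 ≤ μ) (hμn : μ ≤ n) :
    (schurLead (Matrix.hadamard A B) μ (by omega) -
        Matrix.hadamard (diagBlock B μ (by omega)) (schurLead A μ (by omega))).PosSemidef ∧
    (Matrix.hadamard (diagBlock B μ (by omega)) (schurLead A μ (by omega)) -
        Matrix.hadamard (schurLead A μ (by omega)) (schurLead B μ (by omega))).PosSemidef := by
  obtain ⟨m, rfl⟩ : ∃ m, μ = m + 1 := ⟨μ - 1, by omega⟩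
  have h : m < n := by omega
  rw [schurLead_eq (hA.hadamard hB).isHermitian h, schurLead_eq hA.isHermitian h,
    schurLead_eq hB.isHermitian h]
  exact ⟨posSemidef_schur_hadamard_sub_hadamard_schur (leadBlock_posDef hA h.le)
      (leadBlock_posDef hB h.le) (fromBlocks_leadBlock_posDef hB h).posSemidef,
    posSemidef_hadamard_schur_sub_hadamard_schur (leadBlock_posDef hA h.le)
      (fromBlocks_leadBlock_posDef hA h).posSemidef (leadBlock_posDef hB h.le)⟩
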